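/- Let Γ = Γ(G, (G_i)_{i∈I}) be the coset incidence system of a group G over subgroups (G_i)_{i∈I}. For every singleton J = {j} with j ∈ I, the natural homomorphism φ_{{j}} : Γ(G_j, (G_{{j}∪{i}})_{i∈I∖{j}}) → Γ_{{G_j}}, sending a G_{{j,i}} to a G_i for a ∈ G_j, is a bijective homomorphism of incidence systems. -/

import Mathlib

open scoped Pointwise

namespace ChiralGeom

/-- An incidence system `(X, *, t, I)`: a set of elements `X`, a type function `t : X → I`,
and a reflexive symmetric incidence relation such that distinct elements of the same type
are never incident. -/
structure IncidenceSystem (X : Type*) (I : Type*) where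
  t : X → I
  inc : X → X → Prop
  inc_refl : ∀ x, inc x x
  inc_symm : ∀ x y, inc x y → inc y x
  eq_of_inc_of_t_eq : ∀ x y, inc x y → t x = t y → x = y

namespace IncidenceSystem

variable {X I : Type*} (Γ : IncidenceSystem X I)

/-- A flag is a set of pairwise incident elements. -/
def IsFlag (F : Set X) : Prop := ∀ x ∈ F, ∀ y ∈ F, Γ.inc x y

/-- A chamber is a flag of type `I` (containing elements of every type). -/
def IsChamber (C : Set X) : Prop := Γ.IsFlag C ∧ Γ.t '' C = Set.univ

/-- `Γ` is a geometry when every flag is contained in a chamber. -/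
def IsGeometry : Prop := ∀ F : Set X, Γ.IsFlag F → ∃ C : Set X, Γ.IsChamber C ∧ F ⊆ C

/-- The elements of the residue of a flag `F`: elements not in `F` incident to
every element of `F`. -/
def ResidueElt (F : Set X) : Type _ := {x : X // x ∉ F ∧ ∀ y ∈ F, Γ.inc x y}

/-- The residue of a flag `F`, an incidence system over `I ∖ t(F)`. -/
def residue (F : Set X) : IncidenceSystem (Γ.ResidueElt F) {i : I // i ∉ Γ.t '' F} where
  t x := ⟨Γ.t x.1, by
    rintro ⟨y, hy, hty⟩
    exact x.2.1 (by
      rw [Γ.eq_of_inc_of_t_eq x.1 y (x.2.2 y hy) hty.symm]; exact hy)⟩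
  inc x y := Γ.inc x.1 y.1
  inc_refl x := Γ.inc_refl x.1
  inc_symm x y h := Γ.inc_symm _ _ h
  eq_of_inc_of_t_eq x y h ht :=
    Subtype.ext (Γ.eq_of_inc_of_t_eq _ _ h (congrArg Subtype.val ht))

/-- `Γ` is connected when its incidence graph is connected. -/
def Connected : Prop := ∀ x y : X, Relation.ReflTransGen Γ.inc x y

/-- `Γ` is residually connected when every residue of rank at least two
(including `Γ` itself, the residue of the empty flag) is connected. -/
def ResiduallyConnected : Prop :=
  ∀ F : Set X, Γ.IsFlag F → ({i : I | i ∉ Γ.t '' F}).Nontrivial → (Γ.residue F).Connected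

/-- `Γ` is firm when every residue of rank one has at least two elements. -/
def IsFirm : Prop :=
  ∀ F : Set X, Γ.IsFlag F → (∃ i : I, {i' : I | i' ∉ Γ.t '' F} = {i}) →
    ∃ x y : Γ.ResidueElt F, x ≠ y

/-- `Γ` is thin when every residue of rank one has exactly two elements. -/
def IsThin : Prop :=
  ∀ F : Set X, Γ.IsFlag F → (∃ i : I, {i' : I | i' ∉ Γ.t '' F} = {i}) →
    ∃ x y : Γ.ResidueElt F, x ≠ y ∧ ∀ z : Γ.ResidueElt F, z = x ∨ z = y

/-- A type-preserving automorphism: a permutation of the elements preserving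
incidence and types. -/
def IsAut (e : Equiv.Perm X) : Prop :=
  (∀ x y, Γ.inc x y ↔ Γ.inc (e x) (e y)) ∧ ∀ x, Γ.t (e x) = Γ.t x

/-- Two sets of elements (e.g. chambers) in the same orbit of `Aut_I(Γ)`. -/
def SameOrbit (C C' : Set X) : Prop := ∃ e : Equiv.Perm X, Γ.IsAut e ∧ e '' C = C'

/-- Two chambers are adjacent when they differ in exactly one element. -/
def Adjacent (C C' : Set X) : Prop :=
  Γ.IsChamber C ∧ Γ.IsChamber C' ∧
    ∃ x ∈ C, ∃ y ∈ C', x ≠ y ∧ C \ {x} = C' \ {y}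

/-- `Γ` is chiral when `Aut_I(Γ)` has exactly two orbits on chambers,
and adjacent chambers always lie in distinct orbits. -/
def IsChiral : Prop :=
  (∃ C₁ C₂ : Set X, Γ.IsChamber C₁ ∧ Γ.IsChamber C₂ ∧ ¬ Γ.SameOrbit C₁ C₂ ∧
      ∀ C : Set X, Γ.IsChamber C → Γ.SameOrbit C₁ C ∨ Γ.SameOrbit C₂ C) ∧
  ∀ C C' : Set X, Γ.Adjacent C C' → ¬ Γ.SameOrbit C C'

end IncidenceSystem

section Coset

variable {G : Type*} [Group G] {ι : Type*}

/-- The elements of the coset incidence system: pairs `(i, S)` where `S` is a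
(left) coset `g Gᵢ`. -/
abbrev CosetElt (Gs : ι → Subgroup G) : Type _ :=
  {p : ι × Set G // ∃ g : G, p.2 = ({g} : Set G) * (Gs p.1 : Set G)}

lemma mem_singleton_mul_self {H : Subgroup G} (a : G) : a ∈ ({a} : Set G) * (H : Set G) :=
  ⟨a, rfl, 1, H.one_mem, mul_one a⟩

lemma singleton_mul_subgroup_eq {H : Subgroup G} {a b : G}
    (h : ((({a} : Set G) * (H : Set G)) ∩ (({b} : Set G) * (H : Set G))).Nonempty) :
    ({a} : Set G) * (H : Set G) = ({b} : Set G) * (H : Set G) := by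
  obtain ⟨x, hx1, hx2⟩ := h
  obtain ⟨a', ha', h1, hh1, hxa⟩ := Set.mem_mul.mp hx1
  obtain ⟨b', hb', h2, hh2, hxb⟩ := Set.mem_mul.mp hx2
  clear hx1 hx2
  obtain rfl : a = a' := ha'.symm
  obtain rfl : b = b' := hb'.symm
  have key : a * h1 = b * h2 := hxa.trans hxb.symm
  have e1 : b⁻¹ * (a * h1) = h2 := by rw [key, inv_mul_cancel_left]
  have e : b⁻¹ * a = h2 * h1⁻¹ := by rw [← e1]; group
  have hba : b⁻¹ * a ∈ H := e ▸ H.mul_mem hh2 (H.inv_mem hh1)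
  ext y
  simp only [Set.mem_mul, Set.mem_singleton_iff, exists_eq_left]
  constructor
  · rintro ⟨z, hz, rfl⟩
    exact ⟨(b⁻¹ * a) * z, H.mul_mem hba hz, by group⟩
  · rintro ⟨z, hz, rfl⟩
    exact ⟨(a⁻¹ * b) * z, H.mul_mem (by simpa using H.inv_mem hba) hz, by group⟩

/-- The coset incidence system `Γ(G; (Gᵢ)_{i∈ι})` : elements are the cosets `g Gᵢ`,
the type of `g Gᵢ` is `i`, and two cosets are incident iff they meet. -/
def cosetSystem (Gs : ι → Subgroup G) : IncidenceSystem (CosetElt Gs) ι where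
  t p := p.1.1
  inc p q := (p.1.2 ∩ q.1.2).Nonempty
  inc_refl p := by
    obtain ⟨g, hg⟩ := p.2
    exact ⟨g, by rw [Set.inter_self, hg]; exact mem_singleton_mul_self g⟩
  inc_symm p q h := by
    obtain ⟨x, hx1, hx2⟩ := h
    exact ⟨x, hx2, hx1⟩
  eq_of_inc_of_t_eq p q h ht := by
    obtain ⟨a, ha⟩ := p.2
    obtain ⟨b, hb⟩ := q.2
    have ht' : p.1.1 = q.1.1 := ht
    apply Subtype.ext
    apply Prod.ext ht'
    show p.1.2 = q.1.2
    have hb2 : q.1.2 = ({b} : Set G) * (Gs p.1.1 : Set G) := by rw [hb, ht']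
    rw [ha, hb2]
    apply singleton_mul_subgroup_eq
    rw [← ha, ← hb2]
    exact h

/-- The coset `g Gᵢ` as an element of the coset incidence system. -/
def mkElt (Gs : ι → Subgroup G) (i : ι) (g : G) : CosetElt Gs :=
  ⟨(i, ({g} : Set G) * (Gs i : Set G)), ⟨g, rfl⟩⟩

/-- The identity coset `Gᵢ` as an element of the coset incidence system. -/
def idElt (Gs : ι → Subgroup G) (i : ι) : CosetElt Gs :=
  ⟨(i, (Gs i : Set G)), ⟨1, by rw [Set.singleton_one, one_mul]⟩⟩

/-- The action of `g ∈ G` on the coset incidence system by multiplication. -/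
def actElt (Gs : ι → Subgroup G) (g : G) (x : CosetElt Gs) : CosetElt Gs :=
  ⟨(x.1.1, ({g} : Set G) * x.1.2), by
    obtain ⟨a, ha⟩ := x.2
    exact ⟨g * a, by rw [ha, ← mul_assoc, Set.singleton_mul_singleton]⟩⟩

/-- `G` is transitive on the set of flags of type `J` of the coset incidence system. -/
def flagTransitiveOn (Gs : ι → Subgroup G) (J : Set ι) : Prop :=
  ∀ F F' : Set (CosetElt Gs), (cosetSystem Gs).IsFlag F → (cosetSystem Gs).IsFlag F' →
    (cosetSystem Gs).t '' F = J → (cosetSystem Gs).t '' F' = J →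
    ∃ g : G, (actElt Gs g) '' F = F'

/-- The parabolic subgroup `G_J := ⋂_{j ∈ J} G_j`. -/
def interSub (Gs : ι → Subgroup G) (J : Set ι) : Subgroup G := ⨅ j ∈ J, Gs j

/-- The flag `{G_j : j ∈ J}` of identity cosets. -/
def baseFlag (Gs : ι → Subgroup G) (J : Set ι) : Set (CosetElt Gs) :=
  {x | ∃ j ∈ J, x = idElt Gs j}

/-- The family of subgroups `(G_{J ∪ {i}})_{i ∈ I ∖ J}` of `G_J`. -/
def resFamily (Gs : ι → Subgroup G) (J : Set ι) :
    {i : ι // i ∉ J} → Subgroup (interSub Gs J) :=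
  fun i => (interSub Gs (insert i.1 J)).subgroupOf (interSub Gs J)

lemma interSub_le {Gs : ι → Subgroup G} {J : Set ι} {j : ι} (hj : j ∈ J) :
    interSub Gs J ≤ Gs j := by
  intro x hx
  simp only [interSub, Subgroup.mem_iInf] at hx
  exact hx j hj

/-- The canonical homomorphism `φ_J` from the coset incidence system
`Γ(G_J, (G_{J∪{i}})_{i ∈ I∖J})` to the residue of the flag `{G_j : j ∈ J}`,
given by `φ_J (a G_{J∪{i}}) = a G_i` for `a ∈ G_J`. -/
noncomputable def phi (Gs : ι → Subgroup G) (J : Set ι)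
    (x : CosetElt (resFamily Gs J)) :
    (cosetSystem Gs).ResidueElt (baseFlag Gs J) :=
  ⟨mkElt Gs x.1.1.1 (x.2.choose : G), by
    constructor
    · rintro ⟨j, hj, hEq⟩
      have : x.1.1.1 = j := congrArg (fun y : CosetElt Gs => y.1.1) hEq
      exact x.1.1.2 (this ▸ hj)
    · rintro y ⟨j, hj, rfl⟩
      refine ⟨(x.2.choose : G), mem_singleton_mul_self _, ?_⟩
      exact interSub_le hj (x.2.choose).2⟩

end Coset

section CPlus

variable {G : Type*} [Group G]

/-- The subgroup `G⁺_J := ⟨α_i⁻¹ α_j : i, j ∈ J⟩`. -/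
def GJc (α : ℕ → G) (J : Set ℕ) : Subgroup G :=
  Subgroup.closure {g | ∃ i ∈ J, ∃ j ∈ J, g = (α i)⁻¹ * α j}

/-- `(G, {α_1, …, α_{r-1}})` is a C⁺-group: `α_0 = 1`, the `α_j` (`1 ≤ j ≤ r-1`)
generate `G`, and the intersection condition IC⁺ holds. -/
def IsCPlusGroup (r : ℕ) (α : ℕ → G) : Prop :=
  α 0 = 1 ∧
  Subgroup.closure {g | ∃ j : ℕ, 1 ≤ j ∧ j < r ∧ g = α j} = ⊤ ∧
  ∀ J K : Set ℕ, J ⊆ Set.Iio r → K ⊆ Set.Iio r → J.Nontrivial → K.Nontrivial →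
    GJc α J ⊓ GJc α K = GJc α (J ∩ K)

/-- The maximal parabolic subgroups: `G₀⁺ = ⟨α_1⁻¹ α_j : j ≥ 2⟩` and
`G_i⁺ = ⟨α_j : j ≠ i⟩` for `i ≥ 1`. -/
def maxParab (r : ℕ) (α : ℕ → G) (i : ℕ) : Subgroup G :=
  if i = 0 then Subgroup.closure {g | ∃ j : ℕ, 2 ≤ j ∧ j < r ∧ g = (α 1)⁻¹ * α j}
  else Subgroup.closure {g | ∃ j : ℕ, 1 ≤ j ∧ j < r ∧ j ≠ i ∧ g = α j}

/-- The family `(G_i⁺)_{i ∈ {0,…,r-1}}` of maximal parabolic subgroups of a C⁺-group. -/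
def cplusFamily (r : ℕ) (α : ℕ → G) : Fin r → Subgroup G := fun i => maxParab r α i.1

end CPlus

/-!
A coset `g G_i` in the residue of `G_j` meets `G_j`, so it can be written `a G_i` with `a ∈ G_j`;
this gives surjectivity. For `a, b ∈ G_J` we have `a G_i = b G_i` iff `a⁻¹ b ∈ G_i ∩ G_J = G_{J ∪ {i}}`
iff `a G_{J ∪ {i}} = b G_{J ∪ {i}}`, which gives injectivity, and a common element of two cosets
of `G_J` is a common element of their images, which gives incidence. Only surjectivity needs `J`
to be a singleton: a coset meeting every `G_j`, `j ∈ J`, need not meet `G_J`.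
-/

section Phi

variable {G : Type*} [Group G]

lemma singleton_mul_subgroup_eq_smul (H : Subgroup G) (a : G) :
    ({a} : Set G) * (H : Set G) = a • (H : Set G) :=
  Set.singleton_mul

lemma mem_singleton_mul_subgroup_iff {H : Subgroup G} {a x : G} :
    x ∈ ({a} : Set G) * (H : Set G) ↔ a⁻¹ * x ∈ H := by
  rw [singleton_mul_subgroup_eq_smul, mem_leftCoset_iff, SetLike.mem_coe]

lemma singleton_mul_subgroup_eq_iff {H : Subgroup G} {a b : G} :
    ({a} : Set G) * (H : Set G) = ({b} : Set G) * (H : Set G) ↔ a⁻¹ * b ∈ H := by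
  rw [singleton_mul_subgroup_eq_smul, singleton_mul_subgroup_eq_smul, leftCoset_eq_iff]

variable {ι : Type*} {Gs : ι → Subgroup G}

lemma CosetElt.exists_eq_mkElt (x : CosetElt Gs) : ∃ i g, x = mkElt Gs i g := by
  obtain ⟨g, hg⟩ := x.2
  exact ⟨x.1.1, g, Subtype.ext (Prod.ext rfl hg)⟩

lemma mkElt_eq_mkElt_iff {i : ι} {a b : G} : mkElt Gs i a = mkElt Gs i b ↔ a⁻¹ * b ∈ Gs i := by
  rw [← singleton_mul_subgroup_eq_iff, Subtype.ext_iff, Prod.ext_iff]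
  exact and_iff_right rfl

lemma CosetElt.eq_mkElt_of_mem (x : CosetElt Gs) {a : G} (ha : a ∈ x.1.2) :
    x = mkElt Gs x.1.1 a := by
  obtain ⟨i, g, rfl⟩ := x.exists_eq_mkElt
  exact mkElt_eq_mkElt_iff.2 (mem_singleton_mul_subgroup_iff.1 ha)

lemma mkElt_eq_idElt {i : ι} {a : G} (ha : a ∈ Gs i) : mkElt Gs i a = idElt Gs i :=
  Subtype.ext (Prod.ext rfl
    ((singleton_mul_subgroup_eq_smul _ a).trans (leftCoset_mem_leftCoset _ ha)))

lemma mem_resFamily_iff {J : Set ι} {i : {i // i ∉ J}} {a : interSub Gs J} :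
    a ∈ resFamily Gs J i ↔ (a : G) ∈ Gs i := by
  rw [resFamily, Subgroup.mem_subgroupOf, interSub, iInf_insert, Subgroup.mem_inf]
  exact and_iff_left a.2

lemma phi_val_eq_mkElt_of_mem {J : Set ι} (x : CosetElt (resFamily Gs J)) {a : interSub Gs J}
    (ha : a ∈ x.1.2) : (phi Gs J x).1 = mkElt Gs x.1.1.1 a := by
  rw [x.2.choose_spec, mem_singleton_mul_subgroup_iff, mem_resFamily_iff] at ha
  exact mkElt_eq_mkElt_iff.2 (by simpa using ha)

lemma phi_mkElt {J : Set ι} (i : {i // i ∉ J}) (a : interSub Gs J) :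
    (phi Gs J (mkElt (resFamily Gs J) i a)).1 = mkElt Gs i a :=
  phi_val_eq_mkElt_of_mem _ (mem_singleton_mul_self a)

lemma phi_injective (J : Set ι) : Function.Injective (phi Gs J) := by
  intro x y h
  obtain ⟨i, a, rfl⟩ := x.exists_eq_mkElt
  obtain ⟨i', b, rfl⟩ := y.exists_eq_mkElt
  replace h := congrArg Subtype.val h
  rw [phi_mkElt, phi_mkElt] at h
  obtain rfl : i = i' := Subtype.ext (congrArg (fun z : CosetElt Gs => z.1.1) h)
  rw [mkElt_eq_mkElt_iff] at h ⊢
  simpa [mem_resFamily_iff] using h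

lemma phi_inc {J : Set ι} {x y : CosetElt (resFamily Gs J)}
    (hxy : (cosetSystem (resFamily Gs J)).inc x y) :
    ((cosetSystem Gs).residue (baseFlag Gs J)).inc (phi Gs J x) (phi Gs J y) := by
  obtain ⟨c, hcx, hcy⟩ := hxy
  change ((phi Gs J x).1.1.2 ∩ (phi Gs J y).1.1.2).Nonempty
  rw [phi_val_eq_mkElt_of_mem x hcx, phi_val_eq_mkElt_of_mem y hcy]
  exact ⟨c, mem_singleton_mul_self _, mem_singleton_mul_self _⟩

lemma phi_singleton_surjective (j : ι) : Function.Surjective (phi Gs {j}) := by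
  rintro ⟨x, hxF, hxj⟩
  obtain ⟨a, hax, haj⟩ := hxj (idElt Gs j) ⟨j, rfl, rfl⟩
  have hx := x.eq_mkElt_of_mem hax
  have hij : x.1.1 ∉ ({j} : Set ι) := by
    intro hi
    refine hxF ⟨j, rfl, ?_⟩
    rw [hx, Set.mem_singleton_iff.1 hi]
    exact mkElt_eq_idElt haj
  have ha : a ∈ interSub Gs {j} := by rwa [interSub, iInf_singleton]
  refine ⟨mkElt _ ⟨x.1.1, hij⟩ ⟨a, ha⟩, Subtype.ext ?_⟩
  rw [phi_mkElt]
  exact hx.symm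

end Phi

/-- For a singleton `J = {j}`, the natural homomorphism `φ_{{j}}`
is a bijective homomorphism of incidence systems. -/
theorem phi_singleton_bijective_homomorphism
    {G ι : Type*} [Group G] (Gs : ι → Subgroup G) (j : ι) :
    Function.Bijective (phi Gs ({j} : Set ι)) ∧
    (∀ x : CosetElt (resFamily Gs ({j} : Set ι)),
        (cosetSystem Gs).t (phi Gs ({j} : Set ι) x).1 = (x.1.1 : ι)) ∧
    (∀ x y : CosetElt (resFamily Gs ({j} : Set ι)),
        (cosetSystem (resFamily Gs ({j} : Set ι))).inc x y →
          ((cosetSystem Gs).residue (baseFlag Gs ({j} : Set ι))).inc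
            (phi Gs ({j} : Set ι) x) (phi Gs ({j} : Set ι) y)) :=
  ⟨⟨phi_injective _, phi_singleton_surjective j⟩, fun _ => rfl, fun _ _ => phi_inc⟩

end ChiralGeom
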